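/- arXiv:2012.10077 — 2 statements merged into one kernel-verified Lean document; each statement's English description precedes it below -/
import Mathlib

section
/- Under the standard DID design with two nested treatments and separable weights, if Σ_{g,t} N_{g,t} D^2_{g,t} > Σ_{g,t} N_{g,t} 1{g < G^2} 1{t < T^2}, then ε_{g,t} < 0 for all (g,t) with G^1 ≤ g ≤ G^2−1 and T^1 ≤ t ≤ T^2−1. -/
/-!
With separable weights the regression can be solved in closed form. Centre the indicators,
`x̃ₖ = 1{g ≥ Gᵏ} - pᵏ_G` and `ỹₖ = 1{t ≥ Tᵏ} - pᵏ_T`; both have weighted mean zero, so the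
candidate residual `e = x̃₁ ỹ₁ - Z x̃₂ ỹ₂` is orthogonal to all group and time dummies, and
since the treatments are nested, `Z = (1-p¹_G)(1-p¹_T) / ((1-p²_G)(1-p²_T))` makes it
orthogonal to `D²` as well. By Pythagoras every minimiser then has residual `e` on every cell
of positive weight. On a cell with `D¹ = 1`, `D² = 0` this is
`(1-p¹_G)(1-p¹_T) - Z p²_G p²_T = Z ((1-p²_G)(1-p²_T) - p²_G p²_T) < 0`.
-/

open Finset

section TwoWayDesign

variable {ι κ : Type*} (s : Finset ι) (t : Finset κ)

theorem sum_mul_sub_eq_zero (b y : κ → ℝ) (p : ℝ) (hp : p = ∑ j ∈ t, b j * y j)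
    (hb : ∑ j ∈ t, b j = 1) : ∑ j ∈ t, b j * (y j - p) = 0 := by
  simp only [mul_sub, sum_sub_distrib, ← sum_mul, hb, hp, one_mul, sub_self]

theorem sum_mul_mul_sub_of_mul_eq (a x x' : ι → ℝ) (c : ℝ)
    (hx : ∀ i ∈ s, x i * x' i = x i) :
    ∑ i ∈ s, a i * x i * (x' i - c) = (1 - c) * ∑ i ∈ s, a i * x i := by
  rw [mul_sum]
  refine sum_congr rfl fun i hi => ?_
  linear_combination a i * hx i hi

theorem sum_mul_sub_sub_mul_sub_eq_zero (b y1 y2 : κ → ℝ) (hb : ∑ j ∈ t, b j = 1)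
    (p1 p2 : ℝ) (hp1 : p1 = ∑ j ∈ t, b j * y1 j) (hp2 : p2 = ∑ j ∈ t, b j * y2 j) (c1 c2 : ℝ) :
    ∑ j ∈ t, b j * (c1 * (y1 j - p1) - c2 * (y2 j - p2)) = 0 := by
  calc ∑ j ∈ t, b j * (c1 * (y1 j - p1) - c2 * (y2 j - p2))
      = c1 * ∑ j ∈ t, b j * (y1 j - p1) - c2 * ∑ j ∈ t, b j * (y2 j - p2) := by
        rw [mul_sum, mul_sum, ← sum_sub_distrib]
        exact sum_congr rfl fun j _ => by ring
    _ = 0 := by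
        rw [sum_mul_sub_eq_zero t b y1 p1 hp1 hb, sum_mul_sub_eq_zero t b y2 p2 hp2 hb]
        ring

theorem sum_sum_nested_residual_mul_eq_zero (a x1 x2 : ι → ℝ) (b y1 y2 : κ → ℝ)
    (hx21 : ∀ i ∈ s, x2 i * x1 i = x2 i) (hx22 : ∀ i ∈ s, x2 i * x2 i = x2 i)
    (hy21 : ∀ j ∈ t, y2 j * y1 j = y2 j) (hy22 : ∀ j ∈ t, y2 j * y2 j = y2 j)
    (p1X p2X p1Y p2Y : ℝ) (hp2X : p2X = ∑ i ∈ s, a i * x2 i) (hp2Y : p2Y = ∑ j ∈ t, b j * y2 j)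
    (Z : ℝ) (hZ : Z * ((1 - p2X) * (1 - p2Y)) = (1 - p1X) * (1 - p1Y)) :
    ∑ i ∈ s, ∑ j ∈ t, a i * b j *
      ((x1 i - p1X) * (y1 j - p1Y) - Z * ((x2 i - p2X) * (y2 j - p2Y))) * (x2 i * y2 j) = 0 := by
  calc ∑ i ∈ s, ∑ j ∈ t, a i * b j *
        ((x1 i - p1X) * (y1 j - p1Y) - Z * ((x2 i - p2X) * (y2 j - p2Y))) * (x2 i * y2 j)
      = (∑ i ∈ s, a i * x2 i * (x1 i - p1X)) * (∑ j ∈ t, b j * y2 j * (y1 j - p1Y))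
        - Z * ((∑ i ∈ s, a i * x2 i * (x2 i - p2X)) * (∑ j ∈ t, b j * y2 j * (y2 j - p2Y))) := by
        rw [sum_mul_sum, sum_mul_sum, mul_sum, ← sum_sub_distrib]
        refine sum_congr rfl fun i _ => ?_
        rw [mul_sum, ← sum_sub_distrib]
        exact sum_congr rfl fun j _ => by ring
    _ = p2X * p2Y * ((1 - p1X) * (1 - p1Y) - Z * ((1 - p2X) * (1 - p2Y))) := by
        rw [sum_mul_mul_sub_of_mul_eq s a x2 x1 p1X hx21,
          sum_mul_mul_sub_of_mul_eq t b y2 y1 p1Y hy21,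
          sum_mul_mul_sub_of_mul_eq s a x2 x2 p2X hx22,
          sum_mul_mul_sub_of_mul_eq t b y2 y2 p2Y hy22, ← hp2X, ← hp2Y]
        ring
    _ = 0 := by rw [hZ, sub_self, mul_zero]

theorem sum_sum_separable (A : ℝ) (a x : ι → ℝ) (b y : κ → ℝ) :
    ∑ i ∈ s, ∑ j ∈ t, A * a i * b j * x i * y j =
      A * ((∑ i ∈ s, a i * x i) * ∑ j ∈ t, b j * y j) := by
  rw [sum_mul_sum, mul_sum]
  exact sum_congr rfl fun i _ => by rw [mul_sum]; exact sum_congr rfl fun j _ => by ring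

theorem sum_sum_mul_mul_add_eq_zero (a : ι → ℝ) (b : κ → ℝ) (e : ι → κ → ℝ)
    (hrow : ∀ i, ∑ j ∈ t, b j * e i j = 0) (hcol : ∀ j, ∑ i ∈ s, a i * e i j = 0)
    (u : ι → ℝ) (v : κ → ℝ) :
    ∑ i ∈ s, ∑ j ∈ t, a i * b j * e i j * (u i + v j) = 0 := by
  have hsplit : ∀ i j, a i * b j * e i j * (u i + v j) =
      a i * u i * (b j * e i j) + b j * v j * (a i * e i j) := fun i j => by ring
  simp only [hsplit, sum_add_distrib, ← mul_sum, hrow, mul_zero, zero_add]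
  rw [sum_comm]
  simp only [← mul_sum, hcol, mul_zero, sum_const_zero]

theorem eq_of_sum_sum_mul_sq_le (w r r' : ι → κ → ℝ) (hw : ∀ i ∈ s, ∀ j ∈ t, 0 ≤ w i j)
    (horth : ∑ i ∈ s, ∑ j ∈ t, w i j * r i j * (r' i j - r i j) = 0)
    (hle : ∑ i ∈ s, ∑ j ∈ t, w i j * r' i j ^ 2 ≤ ∑ i ∈ s, ∑ j ∈ t, w i j * r i j ^ 2) :
    ∀ i ∈ s, ∀ j ∈ t, 0 < w i j → r' i j = r i j := by
  have hexpand : ∀ i j, w i j * r' i j ^ 2 = w i j * r i j ^ 2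
      + 2 * (w i j * r i j * (r' i j - r i j)) + w i j * (r' i j - r i j) ^ 2 :=
    fun i j => by ring
  simp only [hexpand, sum_add_distrib, ← mul_sum, horth] at hle
  have hnonneg : ∀ i ∈ s, ∀ j ∈ t, 0 ≤ w i j * (r' i j - r i j) ^ 2 :=
    fun i hi j hj => mul_nonneg (hw i hi j hj) (sq_nonneg _)
  have hzero : ∑ i ∈ s, ∑ j ∈ t, w i j * (r' i j - r i j) ^ 2 = 0 :=
    le_antisymm (by linarith) (sum_nonneg fun i hi => sum_nonneg (hnonneg i hi))
  intro i hi j hj hwij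
  rw [sum_eq_zero_iff_of_nonneg fun i hi => sum_nonneg (hnonneg i hi)] at hzero
  have hij := (sum_eq_zero_iff_of_nonneg (hnonneg i hi)).mp (hzero i hi) j hj
  rw [mul_eq_zero, or_iff_right hwij.ne', sq_eq_zero_iff, sub_eq_zero] at hij
  exact hij

theorem nested_twoWay_residual_eq (A : ℝ) (hA : 0 < A) (a x1 x2 : ι → ℝ) (b y1 y2 : κ → ℝ)
    (ha : ∀ i ∈ s, 0 < a i) (hb : ∀ j ∈ t, 0 < b j)
    (hsa : ∑ i ∈ s, a i = 1) (hsb : ∑ j ∈ t, b j = 1)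
    (hx21 : ∀ i ∈ s, x2 i * x1 i = x2 i) (hx22 : ∀ i ∈ s, x2 i * x2 i = x2 i)
    (hy21 : ∀ j ∈ t, y2 j * y1 j = y2 j) (hy22 : ∀ j ∈ t, y2 j * y2 j = y2 j)
    (N D1 D2 : ι → κ → ℝ) (hN : ∀ i j, N i j = A * a i * b j)
    (hD1 : ∀ i j, D1 i j = x1 i * y1 j) (hD2 : ∀ i j, D2 i j = x2 i * y2 j)
    (p1X p2X p1Y p2Y : ℝ)
    (hp1X : p1X = ∑ i ∈ s, a i * x1 i) (hp2X : p2X = ∑ i ∈ s, a i * x2 i)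
    (hp1Y : p1Y = ∑ j ∈ t, b j * y1 j) (hp2Y : p2Y = ∑ j ∈ t, b j * y2 j)
    (hd : (1 - p2X) * (1 - p2Y) ≠ 0)
    (α ζ : ℝ) (γ : ι → ℝ) (ν : κ → ℝ)
    (hmin : ∀ (α' ζ' : ℝ) (γ' : ι → ℝ) (ν' : κ → ℝ),
      ∑ i ∈ s, ∑ j ∈ t, N i j * (D1 i j - α - γ i - ν j - ζ * D2 i j) ^ 2 ≤
      ∑ i ∈ s, ∑ j ∈ t, N i j * (D1 i j - α' - γ' i - ν' j - ζ' * D2 i j) ^ 2) :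
    ∀ i ∈ s, ∀ j ∈ t, D1 i j - α - γ i - ν j - ζ * D2 i j =
      (x1 i - p1X) * (y1 j - p1Y) -
        (1 - p1X) * (1 - p1Y) / ((1 - p2X) * (1 - p2Y)) * ((x2 i - p2X) * (y2 j - p2Y)) := by
  set Z := (1 - p1X) * (1 - p1Y) / ((1 - p2X) * (1 - p2Y))
  set e : ι → κ → ℝ := fun i j => (x1 i - p1X) * (y1 j - p1Y) - Z * ((x2 i - p2X) * (y2 j - p2Y))
  set α₀ := -(p1X * p1Y) + Z * (p2X * p2Y)
  set γ₀ : ι → ℝ := fun i => p1Y * x1 i - Z * p2Y * x2 i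
  set ν₀ : κ → ℝ := fun j => p1X * y1 j - Z * p2X * y2 j
  have he : ∀ i j, D1 i j - α₀ - γ₀ i - ν₀ j - Z * D2 i j = e i j := fun i j => by
    simp only [hD1, hD2, e, α₀, γ₀, ν₀]; ring
  have hrow : ∀ i, ∑ j ∈ t, b j * e i j = 0 := fun i =>
    (sum_congr rfl fun j _ => by simp only [e]; ring).trans
      (sum_mul_sub_sub_mul_sub_eq_zero t b y1 y2 hsb p1Y p2Y hp1Y hp2Y (x1 i - p1X)
        (Z * (x2 i - p2X)))
  have hcol : ∀ j, ∑ i ∈ s, a i * e i j = 0 := fun j =>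
    (sum_congr rfl fun i _ => by simp only [e]; ring).trans
      (sum_mul_sub_sub_mul_sub_eq_zero s a x1 x2 hsa p1X p2X hp1X hp2X (y1 j - p1Y)
        (Z * (y2 j - p2Y)))
  have hD2orth : ∑ i ∈ s, ∑ j ∈ t, a i * b j * e i j * D2 i j = 0 := by
    simp only [hD2]
    exact sum_sum_nested_residual_mul_eq_zero s t a x1 x2 b y1 y2 hx21 hx22 hy21 hy22
      p1X p2X p1Y p2Y hp2X hp2Y Z (div_mul_cancel₀ _ hd)
  have horth : ∑ i ∈ s, ∑ j ∈ t,
      N i j * e i j * ((D1 i j - α - γ i - ν j - ζ * D2 i j) - e i j) = 0 := by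
    have hsplit : ∀ i j, N i j * e i j * ((D1 i j - α - γ i - ν j - ζ * D2 i j) - e i j) =
        A * (a i * b j * e i j * ((α₀ - α + (γ₀ i - γ i)) + (ν₀ j - ν j)))
        + A * (Z - ζ) * (a i * b j * e i j * D2 i j) := fun i j => by
      rw [← he, hN]; ring
    simp only [hsplit, sum_add_distrib, ← mul_sum, hD2orth,
      sum_sum_mul_mul_add_eq_zero s t a b e hrow hcol, mul_zero, add_zero]
  have hle := hmin α₀ Z γ₀ ν₀
  simp only [he] at hle
  intro i hi j hj
  refine eq_of_sum_sum_mul_sq_le s t N e _ (fun i hi j hj => ?_) horth hle i hi j hj ?_ <;>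
    rw [hN]
  · exact (mul_pos (mul_pos hA (ha i hi)) (hb j hj)).le
  · exact mul_pos (mul_pos hA (ha i hi)) (hb j hj)

end TwoWayDesign

theorem ite_le_mul_ite_le_of_le {K K' : ℕ} (h : K ≤ K') (i : ℕ) :
    (if K' ≤ i then (1 : ℝ) else 0) * (if K ≤ i then (1 : ℝ) else 0) =
      if K' ≤ i then (1 : ℝ) else 0 := by
  by_cases hi : K' ≤ i
  · rw [if_pos hi, if_pos (h.trans hi), mul_one]
  · rw [if_neg hi, zero_mul]

theorem sum_mul_ite_lt (s : Finset ℕ) (a : ℕ → ℝ) (K : ℕ) (hsa : ∑ i ∈ s, a i = 1) :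
    ∑ i ∈ s, a i * (if i < K then (1 : ℝ) else 0) =
      1 - ∑ i ∈ s, a i * (if K ≤ i then (1 : ℝ) else 0) := by
  rw [eq_sub_iff_add_eq, ← sum_add_distrib]
  refine (sum_congr rfl fun i _ => ?_).trans hsa
  by_cases hi : i < K
  · rw [if_pos hi, if_neg (not_le.mpr hi)]; ring
  · rw [if_neg hi, if_pos (not_lt.mp hi)]; ring

theorem one_sub_sum_mul_ite_pos (n K : ℕ) (hn : 1 ≤ n) (hK : 1 < K) (a : ℕ → ℝ)
    (ha : ∀ i ∈ Icc 1 n, 0 < a i) (hsa : ∑ i ∈ Icc 1 n, a i = 1) :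
    0 < 1 - ∑ i ∈ Icc 1 n, a i * (if K ≤ i then (1 : ℝ) else 0) := by
  rw [← sum_mul_ite_lt _ a K hsa]
  have h1 : 1 ∈ Icc 1 n := mem_Icc.mpr ⟨le_rfl, hn⟩
  refine sum_pos' (fun i hi => mul_nonneg (ha i hi).le (by positivity)) ⟨1, h1, ?_⟩
  rw [if_pos hK, mul_one]
  exact ha 1 h1

/-- In the standard DID design with two nested treatments and
separable weights, if the total weight of cells receiving the second treatment
exceeds the total weight of cells with `g<G²` and `t<T²`, then the residual of
the weighted regression of `D¹` on group/time dummies and `D²` is strictly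
negative on every cell with `G¹ ≤ g ≤ G²−1` and `T¹ ≤ t ≤ T²−1`. -/
theorem residual_negative_weights_nested_DID

    (G T G1 G2 T1 T2 : ℕ)
    (hG1 : 1 < G1) (hG12 : G1 < G2) (hG2 : G2 ≤ G)
    (hT1 : 1 < T1) (hT12 : T1 < T2) (hT2 : T2 ≤ T)
    (A : ℝ) (hA : 0 < A)
    (a b : ℕ → ℝ)
    (ha : ∀ g ∈ Finset.Icc 1 G, 0 < a g) (hb : ∀ t ∈ Finset.Icc 1 T, 0 < b t)
    (hsa : ∑ g ∈ Finset.Icc 1 G, a g = 1) (hsb : ∑ t ∈ Finset.Icc 1 T, b t = 1)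
    (N D1 D2 : ℕ → ℕ → ℝ)
    (hN : ∀ g t, N g t = A * a g * b t)
    (hD1 : ∀ g t, D1 g t =
      (if G1 ≤ g then (1 : ℝ) else 0) * (if T1 ≤ t then (1 : ℝ) else 0))
    (hD2 : ∀ g t, D2 g t =
      (if G2 ≤ g then (1 : ℝ) else 0) * (if T2 ≤ t then (1 : ℝ) else 0))
    (p1G p2G p1T p2T : ℝ)
    (hp1G : p1G = ∑ g ∈ Finset.Icc 1 G, a g * (if G1 ≤ g then (1 : ℝ) else 0))
    (hp2G : p2G = ∑ g ∈ Finset.Icc 1 G, a g * (if G2 ≤ g then (1 : ℝ) else 0))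
    (hp1T : p1T = ∑ t ∈ Finset.Icc 1 T, b t * (if T1 ≤ t then (1 : ℝ) else 0))
    (hp2T : p2T = ∑ t ∈ Finset.Icc 1 T, b t * (if T2 ≤ t then (1 : ℝ) else 0))
    (α ζ : ℝ) (γ ν : ℕ → ℝ)
    (hmin : ∀ (α' ζ' : ℝ) (γ' ν' : ℕ → ℝ),
      ∑ g ∈ Finset.Icc 1 G, ∑ t ∈ Finset.Icc 1 T,
        N g t * (D1 g t - α - γ g - ν t - ζ * D2 g t) ^ 2 ≤
      ∑ g ∈ Finset.Icc 1 G, ∑ t ∈ Finset.Icc 1 T,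
        N g t * (D1 g t - α' - γ' g - ν' t - ζ' * D2 g t) ^ 2)
    (hbig : ∑ g ∈ Finset.Icc 1 G, ∑ t ∈ Finset.Icc 1 T, N g t * D2 g t >
      ∑ g ∈ Finset.Icc 1 G, ∑ t ∈ Finset.Icc 1 T,
        N g t * (if g < G2 then (1 : ℝ) else 0) * (if t < T2 then (1 : ℝ) else 0)) :
    ∀ g ∈ Finset.Icc 1 G, ∀ t ∈ Finset.Icc 1 T,
      G1 ≤ g → g ≤ G2 - 1 → T1 ≤ t → t ≤ T2 - 1 →
      D1 g t - α - γ g - ν t - ζ * D2 g t < 0 := by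
  have hG : 1 ≤ G := by omega
  have hT : 1 ≤ T := by omega
  have hq1G := hp1G ▸ one_sub_sum_mul_ite_pos G G1 hG hG1 a ha hsa
  have hq2G := hp2G ▸ one_sub_sum_mul_ite_pos G G2 hG (hG1.trans hG12) a ha hsa
  have hq1T := hp1T ▸ one_sub_sum_mul_ite_pos T T1 hT hT1 b hb hsb
  have hq2T := hp2T ▸ one_sub_sum_mul_ite_pos T T2 hT (hT1.trans hT12) b hb hsb
  have hbig' : (1 - p2G) * (1 - p2T) < p2G * p2T := by
    simp only [hN, hD2, ← mul_assoc] at hbig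
    rw [sum_sum_separable, sum_sum_separable, sum_mul_ite_lt _ _ _ hsa,
      sum_mul_ite_lt _ _ _ hsb, ← hp2G, ← hp2T] at hbig
    exact (mul_lt_mul_iff_right₀ hA).mp hbig
  have hresid := nested_twoWay_residual_eq (Icc 1 G) (Icc 1 T) A hA a _ _ b _ _ ha hb hsa hsb
    (fun i _ => ite_le_mul_ite_le_of_le hG12.le i) (fun i _ => ite_le_mul_ite_le_of_le le_rfl i)
    (fun j _ => ite_le_mul_ite_le_of_le hT12.le j) (fun j _ => ite_le_mul_ite_le_of_le le_rfl j)
    N D1 D2 hN hD1 hD2 p1G p2G p1T p2T hp1G hp2G hp1T hp2T (by positivity) α ζ γ ν hmin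
  intro g hg t ht hg1 hg2 ht1 ht2
  rw [hresid g hg t ht, if_pos hg1, if_pos ht1, if_neg (by omega : ¬G2 ≤ g),
    if_neg (by omega : ¬T2 ≤ t)]
  have hc : 0 < (1 - p1G) * (1 - p1T) := mul_pos hq1G hq1T
  have hd : 0 < (1 - p2G) * (1 - p2T) := mul_pos hq2G hq2T
  set c := (1 - p1G) * (1 - p1T)
  set d := (1 - p2G) * (1 - p2T)
  calc c - c / d * ((0 - p2G) * (0 - p2T)) = c / d * (d - p2G * p2T) := by
        field_simp; ring
    _ < 0 := mul_neg_of_pos_of_neg (div_pos hc hd) (by linarith)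
end

section
/- In the setting of the K-treatment TWFE decomposition theorem, if K = 2, then Σ_{(g,t): D^2_{g,t}=1} (N_{g,t}/N_1) w_{g,t} = 0, i.e., the contamination weights on the effect of the second treatment sum to zero. -/
open Finset

/-!
The residual `ε` of a weighted least-squares fit is orthogonal, in the `N`-weighted inner
product, to every included regressor: perturbing the coefficient `ζ` of `D²` by `x` changes the
objective by `x² ∑ N (D²)² - 2x ∑ N D² ε`, which can stay nonnegative for all `x` only if the
linear coefficient vanishes. Since `w = ε / ε̄`, the weighted sum of `w` over `D²` vanishes too.
-/

theorem eq_zero_of_forall_two_mul_le_mul_sq {Q S : ℝ} (h : ∀ x : ℝ, 2 * x * S ≤ Q * x ^ 2) :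
    S = 0 := by
  have hdiscrim : discrim Q (-2 * S) 0 ≤ 0 :=
    discrim_le_zero fun x => by nlinarith [h x]
  rw [discrim] at hdiscrim
  nlinarith [sq_nonneg S]

theorem sum_mul_sub_mul_sq {ι : Type*} (s : Finset ι) (N e d : ι → ℝ) (x : ℝ) :
    ∑ i ∈ s, N i * (e i - x * d i) ^ 2 =
      ∑ i ∈ s, N i * e i ^ 2 - 2 * x * ∑ i ∈ s, N i * d i * e i
        + x ^ 2 * ∑ i ∈ s, N i * d i ^ 2 := by
  simp only [mul_sum, ← sum_sub_distrib, ← sum_add_distrib]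
  exact sum_congr rfl fun i _ => by ring

theorem sum_mul_mul_eq_zero_of_forall_le {ι : Type*} (s : Finset ι) (N e d : ι → ℝ)
    (hmin : ∀ x : ℝ, ∑ i ∈ s, N i * e i ^ 2 ≤ ∑ i ∈ s, N i * (e i - x * d i) ^ 2) :
    ∑ i ∈ s, N i * d i * e i = 0 :=
  eq_zero_of_forall_two_mul_le_mul_sq (Q := ∑ i ∈ s, N i * d i ^ 2) fun x => by
    linarith [hmin x, sum_mul_sub_mul_sq s N e d x]

theorem contamination_weights_sum_to_zero_K2_general
    (G T : ℕ) (N : Fin G → ℕ → ℝ)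
    (d1R d2R : Fin G → ℕ → ℝ)
    (α ζ : ℝ) (γ : Fin G → ℝ) (ν : ℕ → ℝ)
    (hmin : ∀ (α' ζ' : ℝ) (γ' : Fin G → ℝ) (ν' : ℕ → ℝ),
      ∑ g, ∑ t ∈ Finset.Icc 1 T,
        N g t * (d1R g t - α - γ g - ν t - ζ * d2R g t) ^ 2 ≤
      ∑ g, ∑ t ∈ Finset.Icc 1 T,
        N g t * (d1R g t - α' - γ' g - ν' t - ζ' * d2R g t) ^ 2)
    (ε : Fin G → ℕ → ℝ)
    (hε : ∀ g t, ε g t = d1R g t - α - γ g - ν t - ζ * d2R g t)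
    (N1 : ℝ)
    (εbar : ℝ)
    (w : Fin G → ℕ → ℝ) (hw : ∀ g t, w g t = ε g t / εbar) :
    ∑ g, ∑ t ∈ Finset.Icc 1 T, d2R g t * (N g t / N1) * w g t = 0 := by
  have horth : ∑ g, ∑ t ∈ Icc 1 T, N g t * d2R g t * ε g t = 0 := by
    simp only [← sum_product']
    refine sum_mul_mul_eq_zero_of_forall_le _ (fun p : Fin G × ℕ => N p.1 p.2)
      (fun p => ε p.1 p.2) (fun p => d2R p.1 p.2) fun x => ?_
    simp only [sum_product, hε]
    convert hmin α (ζ + x) γ ν using 5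
    ring
  calc ∑ g, ∑ t ∈ Icc 1 T, d2R g t * (N g t / N1) * w g t
      = (∑ g, ∑ t ∈ Icc 1 T, N g t * d2R g t * ε g t) / (N1 * εbar) := by
        simp only [sum_div, hw]
        exact sum_congr rfl fun g _ => sum_congr rfl fun t _ => by ring
    _ = 0 := by rw [horth, zero_div]

/-- With `K = 2` treatments, the contamination weights attached to
the effect of the second treatment in the TWFE decomposition sum to zero:
`Σ_{(g,t):D²_{g,t}=1} (N_{g,t}/N₁) w_{g,t} = 0`, where `w` is the normalized
residual of the weighted regression of `D¹` on group dummies, time dummies and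
`D²`. -/
theorem contamination_weights_sum_to_zero_K2
    (G T : ℕ) (N : Fin G → ℕ → ℝ) (hN : ∀ g t, 0 < N g t)
    (D1 D2 : Fin G → ℕ → Bool)
    (d1R d2R : Fin G → ℕ → ℝ)
    (hd1R : ∀ g t, d1R g t = if D1 g t then 1 else 0)
    (hd2R : ∀ g t, d2R g t = if D2 g t then 1 else 0)
    (α ζ : ℝ) (γ : Fin G → ℝ) (ν : ℕ → ℝ)
    (hmin : ∀ (α' ζ' : ℝ) (γ' : Fin G → ℝ) (ν' : ℕ → ℝ),
      ∑ g, ∑ t ∈ Finset.Icc 1 T,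
        N g t * (d1R g t - α - γ g - ν t - ζ * d2R g t) ^ 2 ≤
      ∑ g, ∑ t ∈ Finset.Icc 1 T,
        N g t * (d1R g t - α' - γ' g - ν' t - ζ' * d2R g t) ^ 2)
    (ε : Fin G → ℕ → ℝ)
    (hε : ∀ g t, ε g t = d1R g t - α - γ g - ν t - ζ * d2R g t)
    (N1 : ℝ) (hN1 : N1 = ∑ g, ∑ t ∈ Finset.Icc 1 T, N g t * d1R g t)
    (hN1pos : 0 < N1)
    (εbar : ℝ)
    (hεbar : εbar = ∑ g, ∑ t ∈ Finset.Icc 1 T, N g t / N1 * d1R g t * ε g t)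
    (hεbarne : εbar ≠ 0)
    (w : Fin G → ℕ → ℝ) (hw : ∀ g t, w g t = ε g t / εbar) :
    ∑ g, ∑ t ∈ Finset.Icc 1 T, d2R g t * (N g t / N1) * w g t = 0 :=
  contamination_weights_sum_to_zero_K2_general G T N d1R d2R α ζ γ ν hmin ε hε N1 εbar w hw
end
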